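/- Let f(z) = Σ a_k (z-ζ)^k be a formal power series with center ζ and let p, q ∈ ℕ. If two rational functions A₁/B₁ and A₂/B₂ both satisfy the Padé conditions (deg A_i ≤ p, deg B_i ≤ q, B_i(ζ) = 1, and the Taylor coefficients of A_i/B_i at ζ agree with a_k for all k ≤ p+q), then A₁/B₁ = A₂/B₂ as rational functions, i.e., A₁·B₂ = A₂·B₁. -/

import Mathlib

open Polynomial PowerSeries

/-- `IsPade a ζ p q A B` : the rational function `A/B` satisfies the conditions defining the
`(p,q)`-Padé approximant at center `ζ` of the formal power series `∑ a_k (z - ζ)^k` :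
`deg A ≤ p`, `deg B ≤ q`, `B(ζ) = 1`, and the Taylor coefficients of `A/B` at `ζ`
(i.e. the coefficients of the formal power series `A(ζ+w)·(B(ζ+w))⁻¹` in `w`) agree with
`a_k` for all `k ≤ p + q`. -/
def IsPade (a : ℕ → ℂ) (ζ : ℂ) (p q : ℕ) (A B : Polynomial ℂ) : Prop :=
  A.degree ≤ (p : WithBot ℕ) ∧ B.degree ≤ (q : WithBot ℕ) ∧ B.eval ζ = 1 ∧
    ∀ k ≤ p + q,
      PowerSeries.coeff (R := ℂ) k
        (((Polynomial.taylor ζ A : Polynomial ℂ) : PowerSeries ℂ) *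
          ((Polynomial.taylor ζ B : Polynomial ℂ) : PowerSeries ℂ)⁻¹) = a k

/-
Clearing denominators, `A₁B₂ - A₂B₁ = (A₁/B₁ - A₂/B₂)·B₁B₂`, and after the Taylor shift to `ζ`
the right-hand side is a power series divisible by `X^(p+q+1)`, because both quotients have the
Taylor coefficients `a_0, …, a_(p+q)`. The left-hand side is a polynomial of degree at most
`p + q`, so it vanishes.
-/

theorem Polynomial.eq_zero_of_X_pow_dvd_coe {R : Type*} [CommSemiring R] {P : R[X]} {n : ℕ}
    (hP : P.natDegree < n) (hdvd : PowerSeries.X ^ n ∣ (P : R⟦X⟧)) : P = 0 := by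
  ext d
  rw [Polynomial.coeff_zero]
  rcases lt_or_ge d n with hd | hd
  · rw [← Polynomial.coeff_coe]
    exact PowerSeries.X_pow_dvd_iff.1 hdvd d hd
  · exact coeff_eq_zero_of_natDegree_lt (hP.trans_le hd)

theorem Polynomial.natDegree_mul_sub_mul_le {R : Type*} [CommRing R] {A₁ B₁ A₂ B₂ : R[X]}
    {p q : ℕ} (hA₁ : A₁.natDegree ≤ p) (hB₁ : B₁.natDegree ≤ q) (hA₂ : A₂.natDegree ≤ p)
    (hB₂ : B₂.natDegree ≤ q) : (A₁ * B₂ - A₂ * B₁).natDegree ≤ p + q :=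
  (natDegree_sub_le_of_le (natDegree_mul_le_of_le hA₁ hB₂) (natDegree_mul_le_of_le hA₂ hB₁)).trans
    (max_self _).le

theorem PowerSeries.X_pow_dvd_mul_sub_mul {k : Type*} [Field k] {F₁ G₁ F₂ G₂ : k⟦X⟧} {n : ℕ}
    (hG₁ : constantCoeff G₁ ≠ 0) (hG₂ : constantCoeff G₂ ≠ 0)
    (hdvd : X ^ n ∣ F₁ * G₁⁻¹ - F₂ * G₂⁻¹) : X ^ n ∣ F₁ * G₂ - F₂ * G₁ := by
  have clear_denominators : F₁ * G₂ - F₂ * G₁ = (F₁ * G₁⁻¹ - F₂ * G₂⁻¹) * (G₁ * G₂) := by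
    linear_combination (-(F₁ * G₂)) * PowerSeries.inv_mul_cancel _ hG₁ +
      (F₂ * G₁) * PowerSeries.inv_mul_cancel _ hG₂
  rw [clear_denominators]
  exact hdvd.mul_right _

namespace IsPade

variable {a : ℕ → ℂ} {ζ : ℂ} {p q : ℕ}

theorem constantCoeff_taylor_ne_zero {A B : ℂ[X]} (h : IsPade a ζ p q A B) :
    constantCoeff (taylor ζ B : ℂ⟦X⟧) ≠ 0 := by
  rw [Polynomial.constantCoeff_coe, taylor_coeff_zero, h.2.2.1]
  exact one_ne_zero

theorem X_pow_dvd_sub {A₁ B₁ A₂ B₂ : ℂ[X]} (h₁ : IsPade a ζ p q A₁ B₁)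
    (h₂ : IsPade a ζ p q A₂ B₂) :
    PowerSeries.X ^ (p + q + 1) ∣ (taylor ζ A₁ : ℂ⟦X⟧) * (taylor ζ B₁ : ℂ⟦X⟧)⁻¹ -
      (taylor ζ A₂ : ℂ⟦X⟧) * (taylor ζ B₂ : ℂ⟦X⟧)⁻¹ := by
  refine PowerSeries.X_pow_dvd_iff.2 fun m hm => ?_
  rw [map_sub, h₁.2.2.2 m (Nat.le_of_lt_succ hm), h₂.2.2.2 m (Nat.le_of_lt_succ hm), sub_self]

end IsPade

/-- Uniqueness of the Padé approximant as a rational function. -/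
theorem pade_unique (a : ℕ → ℂ) (ζ : ℂ) (p q : ℕ) (A₁ B₁ A₂ B₂ : Polynomial ℂ)
    (h₁ : IsPade a ζ p q A₁ B₁) (h₂ : IsPade a ζ p q A₂ B₂) :
    A₁ * B₂ = A₂ * B₁ := by
  have hdeg : (A₁ * B₂ - A₂ * B₁).natDegree ≤ p + q :=
    natDegree_mul_sub_mul_le (natDegree_le_iff_degree_le.2 h₁.1)
      (natDegree_le_iff_degree_le.2 h₁.2.1) (natDegree_le_iff_degree_le.2 h₂.1)
      (natDegree_le_iff_degree_le.2 h₂.2.1)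
  rw [← sub_eq_zero]
  apply taylor_injective ζ
  rw [map_zero]
  refine eq_zero_of_X_pow_dvd_coe (n := p + q + 1) ?_ ?_
  · rw [natDegree_taylor]
    exact Nat.lt_succ_of_le hdeg
  · rw [map_sub, taylor_mul, taylor_mul, Polynomial.coe_sub, Polynomial.coe_mul,
      Polynomial.coe_mul]
    exact X_pow_dvd_mul_sub_mul h₁.constantCoeff_taylor_ne_zero h₂.constantCoeff_taylor_ne_zero
      (h₁.X_pow_dvd_sub h₂)
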